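/- Let m ≥ 3 be an integer that is not squarefree (i.e., p² ∣ m for some prime p). Then for every z ∈ ℂ, the infinite product ∏_{k=1}^{∞} Φ_m(z/k) converges (as the limit of partial products over 1 ≤ k ≤ N) and equals ∏_{1 ≤ j ≤ m−1, gcd(j,m)=1} 1/Γ(1 − z·e^{2πij/m}), where Φ_m is the m-th cyclotomic polynomial and 1/Γ is the entire reciprocal Gamma function; moreover, for z ≠ 0 this common value also equals (1/z^{φ(m)}) · ∏_{1 ≤ j ≤ m−1, gcd(j,m)=1} 1/Γ(−z·e^{2πij/m}). -/

import Mathlib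

/-!
Write `w_μ = z μ` for the primitive `m`-th roots of unity `μ`. Since `Φ_m(0) = 1` and `μ ↦ μ⁻¹`
permutes the primitive roots, `Φ_m(z/k) = ∏_μ (1 - w_μ/k)`. Gauss's limit for `Γ` gives
`n^w ∏_{k ≤ n+1} (1 - w/k) → 1/Γ(1 - w)`, and the correction factors `n^{w_μ}` multiply to
`n^{z ∑ μ} = 1`: when `p² ∣ m` we have `Φ_m(X) = Φ_{m/p}(X^p)`, whose next-to-leading coefficient
`-∑ μ` vanishes. The second formula is `Γ(1 - w) = -w Γ(-w)` with `∏_μ (-z μ) = z^{φ(m)} Φ_m(0)`.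
-/

open Filter Finset

namespace Complex

theorem tendsto_GammaSeq_inv (s : ℂ) :
    Tendsto (fun n ↦ (GammaSeq s n)⁻¹) atTop (nhds (Gamma s)⁻¹) := by
  by_cases hpole : ∃ m : ℕ, s = -m
  · obtain ⟨m, rfl⟩ := hpole
    rw [Gamma_neg_nat_eq_zero, inv_zero]
    -- at a pole the denominator of `GammaSeq` vanishes, and Lean's `x / 0 = 0` makes it `0`
    refine tendsto_const_nhds.congr' ?_
    filter_upwards [eventually_ge_atTop m] with n hn
    have hzero : ∏ j ∈ range (n + 1), (-(m : ℂ) + j) = 0 :=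
      prod_eq_zero (mem_range.mpr (Nat.lt_succ_of_le hn)) (neg_add_cancel _)
    rw [GammaSeq, hzero, div_zero, inv_zero]
  · push Not at hpole
    exact (GammaSeq_tendsto_Gamma s).inv₀ (Gamma_ne_zero hpole)

theorem cpow_mul_prod_one_sub_div_eq_GammaSeq (w : ℂ) {n : ℕ} (hn : n ≠ 0) :
    (n : ℂ) ^ w * ∏ k ∈ Icc 1 (n + 1), (1 - w / k) =
      n / (n + 1) * (GammaSeq (1 - w) n)⁻¹ := by
  have hn' : (n : ℂ) ≠ 0 := Nat.cast_ne_zero.mpr hn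
  rw [GammaSeq]
  set P := ∏ j ∈ range (n + 1), (1 - w + j)
  have hprod : ∏ k ∈ Icc 1 (n + 1), (1 - w / k) = P / (n + 1).factorial := by
    rw [← Ico_add_one_right_eq_Icc, prod_Ico_eq_prod_range, Nat.add_sub_cancel,
      ← prod_range_add_one_eq_factorial, Nat.cast_prod, ← prod_div_distrib]
    refine prod_congr rfl fun j _ ↦ ?_
    have hj : (j : ℂ) + 1 ≠ 0 := Nat.cast_add_one_ne_zero j
    push_cast
    rw [add_comm 1 (j : ℂ)]
    field_simp
    ring
  rw [hprod, cpow_sub _ _ hn', cpow_one, Nat.factorial_succ]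
  by_cases hP : P = 0
  · simp [hP]
  · have hw : (n : ℂ) ^ w ≠ 0 := cpow_ne_zero_iff.mpr (Or.inl hn')
    push_cast
    field_simp

theorem tendsto_cpow_mul_prod_one_sub_div (w : ℂ) :
    Tendsto (fun n : ℕ ↦ (n : ℂ) ^ w * ∏ k ∈ Icc 1 (n + 1), (1 - w / k)) atTop
      (nhds (Gamma (1 - w))⁻¹) := by
  have hlim := (tendsto_natCast_div_add_atTop (1 : ℂ)).mul (tendsto_GammaSeq_inv (1 - w))
  rw [one_mul] at hlim
  refine hlim.congr' ?_
  filter_upwards [eventually_ne_atTop 0] with n hn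
  rw [cpow_mul_prod_one_sub_div_eq_GammaSeq w hn]

theorem prod_cpow_eq_one_of_sum_eq_zero {ι : Type*} (s : Finset ι) (w : ι → ℂ)
    (hw : ∑ i ∈ s, w i = 0) {x : ℂ} (hx : x ≠ 0) : ∏ i ∈ s, x ^ w i = 1 := by
  simp_rw [cpow_def_of_ne_zero hx, ← exp_sum, ← mul_sum, hw, mul_zero, exp_zero]

theorem tendsto_prod_Icc_prod_one_sub_div_of_sum_eq_zero {ι : Type*} (s : Finset ι) (w : ι → ℂ)
    (hw : ∑ i ∈ s, w i = 0) :
    Tendsto (fun N : ℕ ↦ ∏ k ∈ Icc 1 N, ∏ i ∈ s, (1 - w i / k)) atTop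
      (nhds (∏ i ∈ s, (Gamma (1 - w i))⁻¹)) := by
  rw [← tendsto_add_atTop_iff_nat 1]
  refine (tendsto_finsetProd s fun i _ ↦ tendsto_cpow_mul_prod_one_sub_div (w i)).congr' ?_
  filter_upwards [eventually_ne_atTop 0] with n hn
  rw [prod_mul_distrib, prod_cpow_eq_one_of_sum_eq_zero s w hw (Nat.cast_ne_zero.mpr hn),
    one_mul]
  exact prod_comm

theorem inv_Gamma_one_sub {w : ℂ} (hw : w ≠ 0) :
    (Gamma (1 - w))⁻¹ = (-w)⁻¹ * (Gamma (-w))⁻¹ := by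
  rw [sub_eq_neg_add, Gamma_add_one _ (neg_ne_zero.mpr hw), mul_inv]

end Complex

namespace Polynomial

theorem nextCoeff_expand {R : Type*} [CommSemiring R] {p : ℕ} (hp : 1 < p) (f : R[X]) :
    (expand R p f).nextCoeff = 0 := by
  rw [nextCoeff, natDegree_expand, coeff_expand (by omega)]
  split_ifs with hdeg hdvd
  · rfl
  · have hpos : 0 < f.natDegree * p := Nat.pos_of_ne_zero hdeg
    have : p ∣ 1 := by
      simpa [Nat.sub_sub_self hpos] using Nat.dvd_sub (dvd_mul_left p f.natDegree) hdvd
    exact absurd (Nat.le_of_dvd one_pos this) (by omega)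
  · rfl

end Polynomial

open Polynomial

theorem prod_primitiveRoots_inv {K M : Type*} [Field K] [CommMonoid M] {m : ℕ} (hm : 0 < m)
    (f : K → M) : ∏ μ ∈ primitiveRoots m K, f μ⁻¹ = ∏ μ ∈ primitiveRoots m K, f μ := by
  have hinv : ∀ μ ∈ primitiveRoots m K, μ⁻¹ ∈ primitiveRoots m K := fun μ hμ ↦
    (mem_primitiveRoots hm).mpr ((mem_primitiveRoots hm).mp hμ).inv
  exact prod_nbij' (·⁻¹) (·⁻¹) hinv hinv (fun μ _ ↦ inv_inv μ) (fun μ _ ↦ inv_inv μ) fun _ _ ↦ rfl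

namespace IsPrimitiveRoot

variable {K : Type*} [Field K] {ζ : K} {m : ℕ}

theorem sum_primitiveRoots_eq_zero_of_not_squarefree (hζ : IsPrimitiveRoot ζ m)
    (hsq : ¬Squarefree m) :
    ∑ μ ∈ primitiveRoots m K, μ = 0 := by
  obtain ⟨p, hp, hpp⟩ : ∃ p, p.Prime ∧ p * p ∣ m := by
    simpa [Nat.squarefree_iff_prime_squarefree] using hsq
  have hexpand : expand K p (cyclotomic (m / p) K) = cyclotomic m K := by
    rw [cyclotomic_expand_eq_cyclotomic hp (Nat.dvd_div_of_mul_dvd hpp),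
      Nat.div_mul_cancel (dvd_of_mul_left_dvd hpp)]
  have hnext := nextCoeff_expand hp.one_lt (cyclotomic (m / p) K)
  rwa [hexpand, cyclotomic_eq_prod_X_sub_primitiveRoots hζ, prod_X_sub_C_nextCoeff,
    neg_eq_zero] at hnext

theorem prod_neg_primitiveRoots (hζ : IsPrimitiveRoot ζ m) (hm : 1 < m) :
    ∏ μ ∈ primitiveRoots m K, -μ = 1 := by
  have h := cyclotomic_coeff_zero K hm
  simpa [coeff_zero_eq_eval_zero, cyclotomic_eq_prod_X_sub_primitiveRoots hζ, eval_prod] using h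

theorem eval_cyclotomic_eq_prod_one_sub_mul (hζ : IsPrimitiveRoot ζ m) (hm : 1 < m) (x : K) :
    (cyclotomic m K).eval x = ∏ μ ∈ primitiveRoots m K, (1 - μ * x) := by
  have hfactor : ∀ μ ∈ primitiveRoots m K, 1 - μ * x = -μ * (x - μ⁻¹) := by
    intro μ hμ
    have hμ0 : μ ≠ 0 := ((mem_primitiveRoots (by omega)).mp hμ).ne_zero (by omega)
    field_simp
    ring
  rw [prod_congr rfl hfactor, prod_mul_distrib, prod_neg_primitiveRoots hζ hm, one_mul,
    prod_primitiveRoots_inv (by omega) (x - ·), cyclotomic_eq_prod_X_sub_primitiveRoots hζ,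
    eval_prod]
  simp

theorem prod_primitiveRoots_eq_prod_pow {M : Type*} [CommMonoid M] (hζ : IsPrimitiveRoot ζ m)
    (f : K → M) :
    ∏ μ ∈ primitiveRoots m K, f μ = ∏ j ∈ range m with j.Coprime m, f (ζ ^ j) := by
  rcases m.eq_zero_or_pos with rfl | hm
  · simp
  have : NeZero m := ⟨hm.ne'⟩
  symm
  refine prod_nbij (ζ ^ ·) ?_ ?_ ?_ fun _ _ ↦ rfl
  · intro j hj
    simp only [mem_filter, mem_range] at hj
    exact (mem_primitiveRoots hm).mpr ((hζ.pow_iff_coprime hm j).mpr hj.2)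
  · intro i hi j hj hij
    simp only [coe_filter, mem_range, Set.mem_ofPred_eq] at hi hj
    exact hζ.pow_inj hi.1 hj.1 hij
  · intro μ hμ
    have hμ' := (mem_primitiveRoots hm).mp hμ
    obtain ⟨j, hj, rfl⟩ := hζ.eq_pow_of_pow_eq_one hμ'.pow_eq_one
    exact ⟨j, by simpa [hj] using (hζ.pow_iff_coprime hm j).mp hμ', rfl⟩

end IsPrimitiveRoot

theorem Complex.prod_primitiveRoots_eq_prod_exp {M : Type*} [CommMonoid M] {m : ℕ} (hm : 1 < m)
    (g : ℂ → M) :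
    ∏ μ ∈ primitiveRoots m ℂ, g μ =
      ∏ j ∈ (Icc 1 (m - 1)).filter (fun j => Nat.gcd j m = 1),
        g (Complex.exp (2 * (Real.pi : ℂ) * Complex.I * (j : ℂ) / (m : ℂ))) := by
  rw [(isPrimitiveRoot_exp m (by omega)).prod_primitiveRoots_eq_prod_pow]
  refine prod_congr ?_ fun j _ ↦ ?_
  · ext j
    simp only [mem_filter, mem_Icc, mem_range]
    refine ⟨fun ⟨hj, hcop⟩ ↦ ⟨⟨?_, by omega⟩, hcop⟩, fun ⟨hj, hcop⟩ ↦ ⟨by omega, hcop⟩⟩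
    rcases j.eq_zero_or_pos with rfl | hpos
    · rw [Nat.coprime_zero_left] at hcop
      omega
    · exact hpos
  · rw [← exp_nat_mul]
    ring_nf

/-- Theorem 6: if `m ≥ 3` is not squarefree, then `∏_{k≥1} Φ_m(z/k)` converges to
`∏_{1 ≤ j ≤ m-1, (j,m)=1} 1/Γ(1 - z e^{2πij/m})`, which for `z ≠ 0` also equals
`(1/z^{φ(m)}) ∏_{1 ≤ j ≤ m-1, (j,m)=1} 1/Γ(-z e^{2πij/m})`. -/
theorem infinite_product_cyclotomic (m : ℕ) (hm : 3 ≤ m) (hsq : ¬ Squarefree m) (z : ℂ) :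
    Tendsto (fun N : ℕ => ∏ k ∈ Icc 1 N, (Polynomial.cyclotomic m ℂ).eval (z / (k : ℂ)))
      atTop
      (nhds (∏ j ∈ (Icc 1 (m - 1)).filter (fun j => Nat.gcd j m = 1),
        (Complex.Gamma (1 - z *
          Complex.exp (2 * (Real.pi : ℂ) * Complex.I * (j : ℂ) / (m : ℂ))))⁻¹)) ∧
    (z ≠ 0 →
      ∏ j ∈ (Icc 1 (m - 1)).filter (fun j => Nat.gcd j m = 1),
          (Complex.Gamma (1 - z *
            Complex.exp (2 * (Real.pi : ℂ) * Complex.I * (j : ℂ) / (m : ℂ))))⁻¹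
        = 1 / z ^ m.totient *
          ∏ j ∈ (Icc 1 (m - 1)).filter (fun j => Nat.gcd j m = 1),
            (Complex.Gamma (-(z *
              Complex.exp (2 * (Real.pi : ℂ) * Complex.I * (j : ℂ) / (m : ℂ)))))⁻¹) := by
  have hm1 : 1 < m := by omega
  have hζ := Complex.isPrimitiveRoot_exp m (by omega)
  rw [← Complex.prod_primitiveRoots_eq_prod_exp hm1 fun μ ↦ (Complex.Gamma (1 - z * μ))⁻¹,
    ← Complex.prod_primitiveRoots_eq_prod_exp hm1 fun μ ↦ (Complex.Gamma (-(z * μ)))⁻¹]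
  refine ⟨?_, fun hz ↦ ?_⟩
  · have hΦ (k : ℕ) :
        (cyclotomic m ℂ).eval (z / k) = ∏ μ ∈ primitiveRoots m ℂ, (1 - z * μ / k) := by
      rw [hζ.eval_cyclotomic_eq_prod_one_sub_mul hm1]
      exact prod_congr rfl fun μ _ ↦ by ring
    simp_rw [hΦ]
    refine Complex.tendsto_prod_Icc_prod_one_sub_div_of_sum_eq_zero _ _ ?_
    rw [← mul_sum, hζ.sum_primitiveRoots_eq_zero_of_not_squarefree hsq, mul_zero]
  · have hzμ : ∀ μ ∈ primitiveRoots m ℂ, z * μ ≠ 0 := fun μ hμ ↦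
      mul_ne_zero hz (((mem_primitiveRoots (by omega)).mp hμ).ne_zero (by omega))
    rw [prod_congr rfl fun μ hμ ↦ Complex.inv_Gamma_one_sub (hzμ μ hμ), prod_mul_distrib,
      prod_inv_distrib]
    simp_rw [← mul_neg]
    rw [prod_mul_distrib, prod_const, hζ.prod_neg_primitiveRoots hm1,
      Complex.card_primitiveRoots, mul_one, one_div]
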